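/- arXiv:2511.13511 — 10 statements merged into one kernel-verified Lean document; each statement's English description precedes it below -/
import Mathlib

section
/- Let ℚ carry its standard (order) topology and let J = ℚ*ℚ be the join of ℚ with itself, equipped with the quotient topology. Then the diagonal translation action map ℚ × J → J, sending (q, [x,y,t]) to [x+q, y+q, t] (which is well defined), is not continuous, where ℚ × J carries the product topology. -/
open Set

/-- The join relation on `X × Y × [0,1]`: identify `(x,y,0) ~ (x',y,0)` and
`(x,y,1) ~ (x,y',1)`.  The join `X * Y` is the quotient by (the equivalence
relation generated by) this relation, with the quotient topology. -/
abbrev joinRel (X Y : Type*) :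
    X × Y × Icc (0 : ℝ) 1 → X × Y × Icc (0 : ℝ) 1 → Prop := fun p q =>
  p = q ∨ ((p.2.2 : ℝ) = 0 ∧ (q.2.2 : ℝ) = 0 ∧ p.2.1 = q.2.1)
        ∨ ((p.2.2 : ℝ) = 1 ∧ (q.2.2 : ℝ) = 1 ∧ p.1 = q.1)

/-- The join `X * Y` with the quotient topology. -/
abbrev Join (X Y : Type*) := Quot (joinRel X Y)



noncomputable def gfun (x y : ℚ) : ℝ := min (1/2) |(y : ℝ) - 2 * x - Real.sqrt 2|

lemma gfun_pos (x y : ℚ) : 0 < gfun x y := by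
  refine lt_min (by norm_num) ?_
  rw [abs_pos]
  intro h
  exact irrational_sqrt_two ⟨y - 2 * x, by push_cast; linarith⟩

lemma gfun_le (x y : ℚ) : gfun x y ≤ 1/2 := min_le_left _ _

def Vset : Set (ℚ × ℚ × Icc (0:ℝ) 1) :=
  {p | |(p.1 : ℝ)| < 1/2 ∧ 1 - gfun p.1 p.2.1 < (p.2.2 : ℝ)}

lemma isOpen_Vset : IsOpen Vset := by
  have h1 : Continuous fun p : ℚ × ℚ × Icc (0:ℝ) 1 => |(p.1 : ℝ)| :=
    (Rat.continuous_coe_real.comp continuous_fst).abs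
  have habs : Continuous fun p : ℚ × ℚ × Icc (0:ℝ) 1 =>
      |(p.2.1 : ℝ) - (2 * p.1 + Real.sqrt 2)| :=
    ((Rat.continuous_coe_real.comp (continuous_fst.comp continuous_snd)).sub
      ((continuous_const.mul (Rat.continuous_coe_real.comp continuous_fst)).add
        continuous_const)).abs
  have h2 : Continuous fun p : ℚ × ℚ × Icc (0:ℝ) 1 => gfun p.1 p.2.1 := by
    simp only [gfun, sub_sub]
    exact continuous_const.min habs
  have h3 : Continuous fun p : ℚ × ℚ × Icc (0:ℝ) 1 => ((p.2.2 : ℝ)) :=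
    continuous_subtype_val.comp (continuous_snd.comp continuous_snd)
  exact (isOpen_lt h1 continuous_const).inter (isOpen_lt (continuous_const.sub h2) h3)

lemma mem_Vset_iff_of_rel {a b : ℚ × ℚ × Icc (0:ℝ) 1} (h : joinRel ℚ ℚ a b) :
    a ∈ Vset ↔ b ∈ Vset := by
  rcases h with rfl | ⟨h0a, h0b, hy⟩ | ⟨h1a, h1b, hx⟩
  · rfl
  · constructor <;> rintro ⟨-, h2⟩ <;> exfalso
    · rw [h0a] at h2; have := gfun_le a.1 a.2.1; linarith
    · rw [h0b] at h2; have := gfun_le b.1 b.2.1; linarith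
  · simp only [Vset, mem_setOf_eq, h1a, h1b, hx]
    constructor <;> intro h <;> refine ⟨h.1, ?_⟩
    · have := gfun_pos b.1 b.2.1; linarith
    · have := gfun_pos b.1 a.2.1; linarith

lemma mem_Vset_of_eqvGen {a b : ℚ × ℚ × Icc (0:ℝ) 1}
    (h : Relation.EqvGen (joinRel ℚ ℚ) a b) : a ∈ Vset ↔ b ∈ Vset := by
  induction h with
  | rel _ _ h => exact mem_Vset_iff_of_rel h
  | refl => exact Iff.rfl
  | symm _ _ _ ih => exact ih.symm
  | trans _ _ _ _ _ ih1 ih2 => exact ih1.trans ih2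

lemma preimage_image_Vset :
    Quot.mk (joinRel ℚ ℚ) ⁻¹' (Quot.mk (joinRel ℚ ℚ) '' Vset) = Vset := by
  ext p
  simp only [mem_preimage, mem_image]
  constructor
  · rintro ⟨v, hv, hev⟩
    exact (mem_Vset_of_eqvGen (Quot.eq.mp hev.symm)).mpr hv
  · exact fun hp => ⟨p, hp, rfl⟩

/-- The diagonal translation action `ℚ × (ℚ * ℚ) → ℚ * ℚ`,
`(q, [x,y,t]) ↦ [x+q, y+q, t]`. -/
def joinTranslate : ℚ × Join ℚ ℚ → Join ℚ ℚ := fun p =>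
  Quot.lift
    (fun x : ℚ × ℚ × Icc (0 : ℝ) 1 =>
      Quot.mk (joinRel ℚ ℚ) (x.1 + p.1, x.2.1 + p.1, x.2.2))
    (by
      rintro a b (rfl | ⟨h0a, h0b, hy⟩ | ⟨h1a, h1b, hx⟩)
      · rfl
      · exact Quot.sound (Or.inr (Or.inl ⟨h0a, h0b, by rw [hy]⟩))
      · exact Quot.sound (Or.inr (Or.inr ⟨h1a, h1b, by rw [hx]⟩)))
    p.2

/-- The diagonal translation action of `ℚ` on the quotient-topologized join
`ℚ * ℚ` is not continuous. -/
theorem joinTranslate_not_continuous : ¬ Continuous joinTranslate := by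
  intro hc
  have one_mem : (1:ℝ) ∈ Icc (0:ℝ) 1 := by norm_num
  set mk : ℚ × ℚ × Icc (0:ℝ) 1 → Join ℚ ℚ := Quot.mk (joinRel ℚ ℚ) with hmk
  -- the open set U
  have hUopen : IsOpen (mk '' Vset) := by
    rw [isQuotientMap_quot_mk.isOpen_preimage.symm]
    rw [show Quot.mk (joinRel ℚ ℚ) ⁻¹' (mk '' Vset) = Vset from preimage_image_Vset]
    exact isOpen_Vset
  -- the point (0, top) is in the preimage
  have hmem : (0, mk (0, 0, ⟨1, one_mem⟩)) ∈ joinTranslate ⁻¹' (mk '' Vset) := by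
    refine mem_preimage.mpr ⟨(0 + 0, 0 + 0, ⟨1, one_mem⟩), ⟨?_, ?_⟩, rfl⟩
    · norm_num
    · have := gfun_pos 0 0; simpa using by linarith
  obtain ⟨u, w, hu, hw, h0u, htw, huw⟩ :=
    isOpen_prod_iff.mp (hUopen.preimage hc) 0 _ hmem
  obtain ⟨ε, hε, hball⟩ := Metric.isOpen_iff.mp hu 0 h0u
  -- pick a rational y₀ close to √2
  obtain ⟨y₀, hy₀⟩ := exists_rat_near (Real.sqrt 2) (by positivity : (0:ℝ) < ε/2)
  -- (0, y₀, 1) is in the preimage of w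
  have hw' : IsOpen (mk ⁻¹' w) := hw.preimage continuous_quot_mk
  have hy1 : ((0:ℚ), y₀, (⟨1, one_mem⟩ : Icc (0:ℝ) 1)) ∈ mk ⁻¹' w := by
    have he : mk (0, y₀, ⟨1, one_mem⟩) = mk (0, 0, ⟨1, one_mem⟩) :=
      Quot.sound (Or.inr (Or.inr ⟨rfl, rfl, rfl⟩))
    show mk (0, y₀, ⟨1, one_mem⟩) ∈ w
    rw [he]; exact htw
  obtain ⟨δ, hδ, hballδ⟩ := Metric.isOpen_iff.mp hw' _ hy1
  -- pick q
  obtain ⟨q, hq⟩ := exists_rat_near ((y₀ : ℝ) - Real.sqrt 2)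
    (by positivity : (0:ℝ) < min (ε/2) (min δ (1/2)))
  set r : ℝ := |(y₀ : ℝ) - q - Real.sqrt 2| with hr
  have hr0 : 0 < r := by
    rw [hr, abs_pos]
    intro h
    exact irrational_sqrt_two ⟨y₀ - q, by push_cast; linarith⟩
  have hqlt : |((y₀:ℝ) - Real.sqrt 2) - q| < min (ε/2) (min δ (1/2)) := hq
  have hrδ : r < δ := by
    have : r < min δ (1/2) := lt_of_lt_of_le (by rw [hr, show (y₀:ℝ) - q - Real.sqrt 2 = ((y₀:ℝ) - Real.sqrt 2) - q by ring]; exact hqlt) (le_trans (min_le_right _ _) le_rfl)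
    exact lt_of_lt_of_le this (min_le_left _ _)
  have hr2 : r < 1/2 := by
    have : r < min δ (1/2) := lt_of_lt_of_le (by rw [hr, show (y₀:ℝ) - q - Real.sqrt 2 = ((y₀:ℝ) - Real.sqrt 2) - q by ring]; exact hqlt) (le_trans (min_le_right _ _) le_rfl)
    exact lt_of_lt_of_le this (min_le_right _ _)
  have hqε : |(q:ℝ)| < ε := by
    have h1 : |((y₀:ℝ) - Real.sqrt 2) - q| < ε/2 := lt_of_lt_of_le hq (min_le_left _ _)
    have h2 : |(y₀:ℝ) - Real.sqrt 2| < ε/2 := by rwa [abs_sub_comm] at hy₀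
    calc |(q:ℝ)| = |((y₀:ℝ) - Real.sqrt 2) - (((y₀:ℝ) - Real.sqrt 2) - q)| := by ring_nf
      _ ≤ |((y₀:ℝ) - Real.sqrt 2)| + |((y₀:ℝ) - Real.sqrt 2) - q| := abs_sub _ _
      _ < ε/2 + ε/2 := by exact add_lt_add h2 h1
      _ = ε := by ring
  set t : Icc (0:ℝ) 1 := ⟨1 - r, by constructor <;> [linarith; linarith]⟩ with ht
  -- (0, y₀, t) is in the δ-ball
  have hz : mk ((0:ℚ), y₀, t) ∈ w := by
    apply hballδ
    rw [Metric.mem_ball]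
    rw [Prod.dist_eq, Prod.dist_eq]
    simp only [dist_self]
    rw [Subtype.dist_eq]
    simp only [ht]
    rw [Real.dist_eq]
    rw [show (1 - r) - 1 = -r by ring, abs_neg, abs_of_pos hr0]
    simp [hrδ, hδ]
  have hqu : q ∈ u := by
    apply hball
    rw [Metric.mem_ball, Rat.dist_eq]
    simpa using hqε
  have hfinal := huw (Set.mk_mem_prod hqu hz)
  -- hfinal : joinTranslate (q, mk (0,y₀,t)) ∈ mk '' Vset
  have hmem2 : ((0:ℚ) + q, y₀ + q, t) ∈ Vset := by
    rw [← preimage_image_Vset]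
    exact hfinal
  have hg : gfun (0 + q) (y₀ + q) = r := by
    have harg : ((y₀ + q : ℚ) : ℝ) - 2 * ((0 + q : ℚ) : ℝ) - Real.sqrt 2
        = (y₀ : ℝ) - q - Real.sqrt 2 := by push_cast; ring
    show min (1/2) |((y₀ + q : ℚ) : ℝ) - 2 * ((0 + q : ℚ) : ℝ) - Real.sqrt 2| = r
    rw [harg]
    exact min_eq_right hr2.le
  have := hmem2.2
  rw [hg] at this
  simp only [ht] at this
  linarith
end

section
/- Let ℚ carry its standard (order) topology and let C ℚ be the cone on ℚ, equipped with the quotient topology. Then the translation action map ℚ × C ℚ → C ℚ, sending (q, [x,t]) to [q+x, t] (which is well defined), is not continuous, where ℚ × C ℚ carries the product topology. -/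
/-!
The set `U = {[x, t] | t < |x - √2|}` is open in `C ℚ`, since its preimage in `ℚ × [0,1]` is
open and, `√2` being irrational, contains all of `ℚ × {0}`. Continuity of the action at
`(0, apex)` would give neighbourhoods `W ∋ 0` and `V ∋ apex` with `W + V ⊆ U`. Take `x ∈ ℚ`
close to `√2`; `V` contains some `[x, t]` with `t > 0`, and `W` contains a small `q` with
`|q + x - √2| < t`, so that `[q + x, t] ∉ U`.
-/

open Set

/-- The cone relation on `X × [0,1]`: identify `(x,0) ~ (x',0)`.  The cone
`C X` is the quotient by (the equivalence relation generated by) this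
relation, with the quotient topology. -/
abbrev coneRel (X : Type*) : X × Icc (0 : ℝ) 1 → X × Icc (0 : ℝ) 1 → Prop :=
  fun p q => p = q ∨ ((p.2 : ℝ) = 0 ∧ (q.2 : ℝ) = 0)

/-- The cone `C X` with the quotient topology. -/
abbrev Cone (X : Type*) := Quot (coneRel X)

/-- The translation action `ℚ × C ℚ → C ℚ`, `(q, [x,t]) ↦ [q+x, t]`. -/
def coneTranslate : ℚ × Cone ℚ → Cone ℚ := fun p =>
  Quot.lift
    (fun x : ℚ × Icc (0 : ℝ) 1 => Quot.mk (coneRel ℚ) (p.1 + x.1, x.2))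
    (by
      rintro a b (rfl | ⟨h0a, h0b⟩)
      · rfl
      · exact Quot.sound (Or.inr ⟨h0a, h0b⟩))
    p.2

open Topology Filter

section Cone

variable {X : Type*}

/-- `{[x, t] | t < f x}`; positivity of `f` makes membership independent of the
representative of the apex. -/
def coneBelow (f : X → ℝ) (hf : ∀ x, 0 < f x) : Set (Cone X) :=
  {c | Quot.lift (fun p : X × Icc (0 : ℝ) 1 => (p.2 : ℝ) < f p.1)
    (by
      rintro a b (rfl | ⟨ha, hb⟩)
      · rfl
      · simp only [ha, hb, hf]) c}

theorem mk_mem_coneBelow {f : X → ℝ} {hf : ∀ x, 0 < f x} {p : X × Icc (0 : ℝ) 1} :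
    Quot.mk (coneRel X) p ∈ coneBelow f hf ↔ (p.2 : ℝ) < f p.1 :=
  Iff.rfl

theorem mk_zero_mem_coneBelow {f : X → ℝ} (hf : ∀ x, 0 < f x) (x : X) :
    Quot.mk (coneRel X) (x, 0) ∈ coneBelow f hf :=
  hf x

theorem mk_zero_eq_mk_zero (x y : X) :
    Quot.mk (coneRel X) (x, 0) = Quot.mk (coneRel X) (y, 0) :=
  Quot.sound (Or.inr ⟨rfl, rfl⟩)

variable [TopologicalSpace X]

theorem isOpen_coneBelow {f : X → ℝ} (hfc : Continuous f) (hf : ∀ x, 0 < f x) :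
    IsOpen (coneBelow f hf) :=
  isOpen_coinduced.2 <|
    isOpen_lt (continuous_subtype_val.comp continuous_snd) (hfc.comp continuous_fst)

theorem exists_pos_mk_mem_of_mem_nhds_apex {V : Set (Cone X)} (x y : X)
    (hV : V ∈ 𝓝 (Quot.mk (coneRel X) (y, 0))) :
    ∃ t : Icc (0 : ℝ) 1, 0 < (t : ℝ) ∧ Quot.mk (coneRel X) (x, t) ∈ V := by
  rw [mk_zero_eq_mk_zero y x] at hV
  have hslice : Continuous fun t : Icc (0 : ℝ) 1 => Quot.mk (coneRel X) (x, t) :=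
    continuous_quot_mk.comp (by fun_prop)
  obtain ⟨ε, hε, hball⟩ := Metric.mem_nhds_iff.1 (hslice.continuousAt.preimage_mem_nhds hV)
  have hs : 0 < min (ε / 2) 1 := by positivity
  refine ⟨⟨min (ε / 2) 1, hs.le, min_le_right _ _⟩, hs, hball ?_⟩
  rw [Metric.mem_ball, Subtype.dist_eq, Icc.coe_zero, Real.dist_eq, sub_zero, abs_of_pos hs]
  exact (min_le_left _ _).trans_lt (half_lt_self hε)

end Cone

theorem coneTranslate_mk (q : ℚ) (p : ℚ × Icc (0 : ℝ) 1) :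
    coneTranslate (q, Quot.mk (coneRel ℚ) p) = Quot.mk (coneRel ℚ) (q + p.1, p.2) :=
  rfl

theorem exists_rat_abs_lt_and_abs_add_sub_lt {α δ t : ℝ} {x : ℚ} (hx : |(x : ℝ) - α| < δ)
    (ht : 0 < t) : ∃ q : ℚ, |(q : ℝ)| < δ ∧ |(q + x : ℝ) - α| < t := by
  obtain ⟨hxlo, hxhi⟩ := abs_lt.1 hx
  have hlt : max (α - x - t) (-δ) < min (α - x + t) δ :=
    max_lt (lt_min (by linarith) (by linarith)) (lt_min (by linarith) (by linarith))
  obtain ⟨q, hlo, hhi⟩ := exists_rat_btwn hlt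
  rw [max_lt_iff] at hlo
  rw [lt_min_iff] at hhi
  exact ⟨q, abs_lt.2 ⟨hlo.2, hhi.2⟩, abs_lt.2 ⟨by linarith, by linarith⟩⟩

/-- The translation action of `ℚ` on its quotient-topologized cone `C ℚ`
is not continuous. -/
theorem coneTranslate_not_continuous : ¬ Continuous coneTranslate := by
  intro hc
  have hpos (x : ℚ) : 0 < |(x : ℝ) - √2| :=
    abs_pos.2 (sub_ne_zero.2 (irrational_sqrt_two.ne_rat x).symm)
  set U := coneBelow (fun x : ℚ => |(x : ℝ) - √2|) hpos
  have hU : IsOpen U := isOpen_coneBelow (X := ℚ) (by fun_prop) hpos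
  have hpre : coneTranslate ⁻¹' U ∈ 𝓝 ((0 : ℚ), Quot.mk (coneRel ℚ) (0, 0)) :=
    hc.continuousAt.preimage_mem_nhds <| hU.mem_nhds <| by
      rw [coneTranslate_mk]; exact mk_zero_mem_coneBelow hpos _
  obtain ⟨W, hW, V, hV, hWV⟩ := mem_nhds_prod_iff.1 hpre
  obtain ⟨δ, hδ, hball⟩ := Metric.mem_nhds_iff.1 hW
  obtain ⟨x, hxlo, hxhi⟩ := exists_rat_btwn (sub_lt_self √2 hδ)
  have hx : |(x : ℝ) - √2| < δ := abs_lt.2 ⟨by linarith, by linarith⟩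
  obtain ⟨t, ht, hxt⟩ := exists_pos_mk_mem_of_mem_nhds_apex x 0 hV
  obtain ⟨q, hqδ, hqt⟩ := exists_rat_abs_lt_and_abs_add_sub_lt hx ht
  have hqW : q ∈ W := hball (by rwa [Metric.mem_ball, Rat.dist_eq, Rat.cast_zero, sub_zero])
  have hbelow := hWV (mk_mem_prod hqW hxt)
  rw [mem_preimage, coneTranslate_mk, mk_mem_coneBelow] at hbelow
  push_cast at hbelow
  exact hbelow.not_gt hqt
end

section
/- Let G be a Hausdorff topological group. If the translation action map G × C G → C G, (g, [x,t]) ↦ [g·x, t], is not continuous (C G with the quotient topology, the domain with the product topology), then the diagonal right action map (G*G) × G → G*G, ([x,y,t], h) ↦ [x·h, y·h, t], is not continuous (G*G with the quotient topology, the domain with the product topology). -/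
open Set

variable (G : Type*) [Group G] [TopologicalSpace G] [IsTopologicalGroup G] [T2Space G]

/-- The translation action `G × C G → C G`, `(g, [x,t]) ↦ [g·x, t]`. -/
def coneAct : G × Cone G → Cone G := fun p =>
  Quot.lift
    (fun x : G × Icc (0 : ℝ) 1 => Quot.mk (coneRel G) (p.1 * x.1, x.2))
    (by
      rintro a b (rfl | ⟨h0a, h0b⟩)
      · rfl
      · exact Quot.sound (Or.inr ⟨h0a, h0b⟩))
    p.2

/-- The diagonal right action `(G * G) × G → G * G`,
`([x,y,t], h) ↦ [x·h, y·h, t]`. -/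
def joinAct : Join G G × G → Join G G := fun p =>
  Quot.lift
    (fun x : G × G × Icc (0 : ℝ) 1 =>
      Quot.mk (joinRel G G) (x.1 * p.2, x.2.1 * p.2, x.2.2))
    (by
      rintro a b (rfl | ⟨h0a, h0b, hy⟩ | ⟨h1a, h1b, hx⟩)
      · rfl
      · exact Quot.sound (Or.inr (Or.inl ⟨h0a, h0b, by rw [hy]⟩))
      · exact Quot.sound (Or.inr (Or.inr ⟨h1a, h1b, by rw [hx]⟩)))
    p.1

/-!
The translation action on `C G` factors through the diagonal action on `G * G`.
Embed the cone into the join by `[x,t] ↦ [x,1,t/2]` and map the join back onto the cone by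
`[u,v,s] ↦ [v u v⁻¹, min (2s) (2-2s)]`; both maps are continuous, and
`[x,1,t/2]·g = [x g, g, t/2]` is sent back to `[g (x g) g⁻¹, t] = [g x, t]`.
Hence continuity of the join action would force continuity of the cone action.
-/

namespace Set.Icc

noncomputable def half (t : Icc (0 : ℝ) 1) : Icc (0 : ℝ) 1 :=
  ⟨t / 2, by constructor <;> linarith [t.2.1, t.2.2]⟩

noncomputable def tent (s : Icc (0 : ℝ) 1) : Icc (0 : ℝ) 1 :=
  ⟨min (2 * s) (2 - 2 * s), le_min (by linarith [s.2.1]) (by linarith [s.2.2]),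
    by rcases le_total (s : ℝ) (1 / 2) with hs | hs
       · exact (min_le_left _ _).trans (by linarith)
       · exact (min_le_right _ _).trans (by linarith)⟩

lemma continuous_half : Continuous half :=
  (continuous_subtype_val.div_const 2).subtype_mk _

lemma continuous_tent : Continuous tent :=
  (by fun_prop : Continuous fun s : Icc (0 : ℝ) 1 => min (2 * (s : ℝ)) (2 - 2 * s)).subtype_mk _

lemma coe_half_eq_zero {t : Icc (0 : ℝ) 1} (ht : (t : ℝ) = 0) : (half t : ℝ) = 0 := by
  simp [half, ht]

lemma coe_tent_eq_zero {s : Icc (0 : ℝ) 1} (hs : (s : ℝ) = 0 ∨ (s : ℝ) = 1) :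
    (tent s : ℝ) = 0 := by
  rcases hs with hs | hs <;> simp [tent, hs]

lemma tent_half (t : Icc (0 : ℝ) 1) : tent (half t) = t := by
  apply Subtype.ext
  change min (2 * ((t : ℝ) / 2)) (2 - 2 * ((t : ℝ) / 2)) = t
  rw [min_eq_left (by linarith [t.2.2])]
  ring

end Set.Icc

section ConeJoin

variable {X Y Z : Type*}

noncomputable def Cone.toJoin (y : Y) : Cone X → Join X Y :=
  Quot.lift (fun p : X × Icc (0 : ℝ) 1 => Quot.mk (joinRel X Y) (p.1, y, Icc.half p.2)) <| by
    rintro a b (rfl | ⟨ha, hb⟩)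
    · rfl
    · exact Quot.sound (Or.inr (Or.inl ⟨Icc.coe_half_eq_zero ha, Icc.coe_half_eq_zero hb, rfl⟩))

noncomputable def Join.toCone (f : X → Y → Z) : Join X Y → Cone Z :=
  Quot.lift (fun p : X × Y × Icc (0 : ℝ) 1 =>
      Quot.mk (coneRel Z) (f p.1 p.2.1, Icc.tent p.2.2)) <| by
    rintro a b (rfl | ⟨ha, hb, -⟩ | ⟨ha, hb, -⟩)
    · rfl
    · exact Quot.sound (Or.inr ⟨Icc.coe_tent_eq_zero (.inl ha), Icc.coe_tent_eq_zero (.inl hb)⟩)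
    · exact Quot.sound (Or.inr ⟨Icc.coe_tent_eq_zero (.inr ha), Icc.coe_tent_eq_zero (.inr hb)⟩)

variable [TopologicalSpace X] [TopologicalSpace Y] [TopologicalSpace Z]

lemma Cone.continuous_toJoin (y : Y) : Continuous (Cone.toJoin (X := X) y) :=
  continuous_quot_lift _ <| continuous_quot_mk.comp <|
    continuous_fst.prodMk (continuous_const.prodMk (Icc.continuous_half.comp continuous_snd))

lemma Join.continuous_toCone {f : X → Y → Z} (hf : Continuous (Function.uncurry f)) :
    Continuous (Join.toCone f) :=
  continuous_quot_lift _ <| continuous_quot_mk.comp <|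
    (hf.comp (continuous_fst.prodMk (continuous_fst.comp continuous_snd))).prodMk
      (Icc.continuous_tent.comp (continuous_snd.comp continuous_snd))

end ConeJoin

lemma coneAct_eq_toCone_comp_joinAct {G : Type*} [Group G] :
    coneAct G = Join.toCone (fun u v : G => v * u * v⁻¹) ∘ joinAct G ∘
      fun p : G × Cone G => (Cone.toJoin 1 p.2, p.1) := by
  funext ⟨g, c⟩
  induction c using Quot.ind with
  | mk p =>
    change Quot.mk (coneRel G) (g * p.1, p.2)
      = Quot.mk (coneRel G) (1 * g * (p.1 * g) * (1 * g)⁻¹, Icc.tent (Icc.half p.2))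
    rw [Icc.tent_half]
    simp [mul_assoc]

lemma continuous_coneAct_of_continuous_joinAct {G : Type*} [Group G] [TopologicalSpace G]
    [IsTopologicalGroup G] (hj : Continuous (joinAct G)) :
    Continuous (coneAct G) := by
  rw [coneAct_eq_toCone_comp_joinAct]
  exact (Join.continuous_toCone (by fun_prop)).comp <|
    hj.comp (((Cone.continuous_toJoin 1).comp continuous_snd).prodMk continuous_fst)

/-- If a Hausdorff topological group acts discontinuously on its
quotient-topologized cone, then its diagonal right action on the
quotient-topologized join `G * G` is also discontinuous. -/
theorem joinAct_not_continuous_of_coneAct_not_continuous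
    (h : ¬ Continuous (coneAct G)) : ¬ Continuous (joinAct G) :=
  mt continuous_coneAct_of_continuous_joinAct h
end

section
/- Let G be a Hausdorff topological group. If the map id_G × π : G × (G × [0,1]) → G × C G is not a quotient map, where π : G × [0,1] → C G is the cone quotient map and G × C G carries the product topology of G with the quotient-topologized cone C G (i.e., if the quotient topology and the product topology on G × C G differ), then the diagonal right action map (G*G) × G → G*G, ([x,y,t], h) ↦ [x·h, y·h, t], is not continuous (G*G with the quotient topology, the domain with the product topology). -/
open Set

variable (G : Type*) [Group G] [TopologicalSpace G] [IsTopologicalGroup G] [T2Space G]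

/-- The map `id_G × π : G × (G × [0,1]) → G × C G`, where `π` is the cone
quotient map and the codomain carries the product topology of `G` with the
quotient-topologized cone. -/
def idTimesConeProj : G × (G × Icc (0 : ℝ) 1) → G × Cone G := fun p =>
  (p.1, Quot.mk (coneRel G) p.2)

/-!
If the action is continuous, then `β : (y, [x, t]) ↦ [x y, y, t / 2]` is a continuous map
`G × C G → G * G`. Over the part `t ≤ 1/2` of the join, `[a, b, t] ↦ (b, [a b⁻¹, 2t])` inverts `β`.
So for `U ⊆ G × C G` with open preimage in `G × (G × [0,1])`, pulling `U` back along this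
inverse and adding the points with `t > 1/2` gives an open subset `S` of the join with
`U = β⁻¹ S`; hence `U` is open in the product topology.
-/

open Topology unitInterval

namespace unitInterval

noncomputable def halve (t : I) : I :=
  ⟨t / 2, by linarith [t.2.1], by linarith [t.2.2]⟩

noncomputable def double (t : I) : I :=
  projIcc 0 1 zero_le_one (2 * t)

lemma continuous_halve : Continuous halve :=
  (continuous_subtype_val.div_const 2).subtype_mk _

lemma continuous_double : Continuous double :=
  continuous_projIcc.comp (continuous_const.mul continuous_subtype_val)

lemma coe_halve_le (t : I) : (halve t : ℝ) ≤ 1 / 2 := by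
  simp only [halve]
  linarith [t.2.2]

lemma double_halve (t : I) : double (halve t) = t := by
  simp only [double, halve, mul_div_cancel₀ (t : ℝ) two_ne_zero, projIcc_val]

lemma double_eq_zero {t : I} (ht : (t : ℝ) = 0) : double t = 0 := by
  simp [double, ht]

end unitInterval

noncomputable def coneToJoin {X Y : Type*} (y : Y) : Cone X → Join X Y :=
  Quot.lift (fun z => Quot.mk _ (z.1, y, halve z.2)) <| by
    rintro a b (rfl | ⟨ha, hb⟩)
    · rfl
    · exact Quot.sound <| Or.inr <| Or.inl ⟨by simp [halve, ha], by simp [halve, hb], rfl⟩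

lemma continuous_coneToJoin {X Y : Type*} [TopologicalSpace X] [TopologicalSpace Y] (y : Y) :
    Continuous (coneToJoin (X := X) y) :=
  continuous_quot_lift _ <| continuous_quot_mk.comp <|
    continuous_fst.prodMk <| continuous_const.prodMk <| continuous_halve.comp continuous_snd

lemma surjective_idTimesConeProj (X : Type*) : Function.Surjective (idTimesConeProj X) := by
  rintro ⟨g, c⟩
  obtain ⟨z, rfl⟩ := Quot.exists_rep c
  exact ⟨(g, z), rfl⟩

lemma continuous_idTimesConeProj (X : Type*) [TopologicalSpace X] :
    Continuous (idTimesConeProj X) :=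
  continuous_fst.prodMk (continuous_quot_mk.comp continuous_snd)

noncomputable def joinChart (K : Type*) [Group K] : K × K × I → K × K × I :=
  fun a => (a.2.1, a.1 * a.2.1⁻¹, double a.2.2)

lemma continuous_joinChart (K : Type*) [Group K] [TopologicalSpace K] [IsTopologicalGroup K] :
    Continuous (joinChart K) :=
  (continuous_fst.comp continuous_snd).prodMk <|
    (continuous_fst.mul (continuous_fst.comp continuous_snd).inv).prodMk
      (continuous_double.comp (continuous_snd.comp continuous_snd))

lemma joinChart_mul_one_mul_halve {K : Type*} [Group K] (x y : K) (t : I) :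
    joinChart K (x * y, 1 * y, halve t) = (y, x, t) := by
  simp [joinChart, double_halve]

/-- The points with `t > 1/2` are thrown in to make the set saturated at `t = 1`,
where `idTimesConeProj K ∘ joinChart K` does not descend to the join. -/
def joinSaturation {K : Type*} [Group K] (U : Set (K × Cone K)) : Set (K × K × I) :=
  joinChart K ⁻¹' (idTimesConeProj K ⁻¹' U) ∪ {a | 1 / 2 < (a.2.2 : ℝ)}

lemma mem_joinSaturation_eq_of_joinRel {K : Type*} [Group K] (U : Set (K × Cone K))
    {a b : K × K × I} (hab : joinRel K K a b) :
    (a ∈ joinSaturation U) = (b ∈ joinSaturation U) := by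
  rcases hab with rfl | ⟨ha, hb, hy⟩ | ⟨ha, hb, -⟩
  · rfl
  · have : idTimesConeProj K (joinChart K a) = idTimesConeProj K (joinChart K b) := by
      simp only [joinChart, idTimesConeProj, hy]
      exact congrArg _ <| Quot.sound <| Or.inr
        ⟨by simp [double_eq_zero ha], by simp [double_eq_zero hb]⟩
    simp only [joinSaturation, mem_union, mem_preimage, this, mem_ofPred_eq, ha, hb]
  · simp only [joinSaturation, mem_union, mem_ofPred_eq, ha, hb]
    norm_num

lemma isOpen_joinSaturation {K : Type*} [Group K] [TopologicalSpace K] [IsTopologicalGroup K]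
    {U : Set (K × Cone K)} (hU : IsOpen (idTimesConeProj K ⁻¹' U)) :
    IsOpen (joinSaturation U) :=
  (hU.preimage (continuous_joinChart K)).union <|
    isOpen_Ioi.preimage (continuous_subtype_val.comp (continuous_snd.comp continuous_snd))

lemma isQuotientMap_idTimesConeProj_of_continuous_joinAct {K : Type*} [Group K]
    [TopologicalSpace K] [IsTopologicalGroup K] (hc : Continuous (joinAct K)) :
    IsQuotientMap (idTimesConeProj K) := by
  refine (isQuotientMap_iff _).2 ⟨isCoinducing_iff.2 fun U => ⟨fun hU => ?_,
    fun hU => hU.preimage (continuous_idTimesConeProj K)⟩, surjective_idTimesConeProj K⟩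
  let β : K × Cone K → Join K K := fun p => joinAct K (coneToJoin 1 p.2, p.1)
  have hβ : Continuous β :=
    hc.comp <| ((continuous_coneToJoin 1).comp continuous_snd).prodMk continuous_fst
  let S : Set (Join K K) := {c | Quot.lift (· ∈ joinSaturation U)
    (fun _ _ => mem_joinSaturation_eq_of_joinRel U) c}
  have hS : IsOpen S := isQuotientMap_quot_mk.isOpen_preimage.1 (isOpen_joinSaturation hU)
  suffices U = β ⁻¹' S from this ▸ hS.preimage hβ
  ext ⟨y, c⟩
  induction c using Quot.ind with
  | mk z =>
    show _ ↔ idTimesConeProj K (joinChart K (z.1 * y, 1 * y, halve z.2)) ∈ U ∨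
      1 / 2 < (halve z.2 : ℝ)
    rw [joinChart_mul_one_mul_halve, or_iff_left (coe_halve_le z.2).not_gt]
    rfl

/-- If the quotient and product topologies on `G × C G` differ, i.e. the map
`id_G × π : G × (G × [0,1]) → G × C G` is not a quotient map, then the
diagonal right action of `G` on the quotient-topologized join `G * G` is not
continuous. -/
theorem joinAct_not_continuous_of_not_isQuotientMap
    (h : ¬ Topology.IsQuotientMap (idTimesConeProj G)) : ¬ Continuous (joinAct G) :=
  fun hc => h (isQuotientMap_idTimesConeProj_of_continuous_joinAct hc)
end

section
/- Let G be a Hausdorff topological group and n ≥ 1 a natural number. If the translation action map G × C G → C G, (g, [x,t]) ↦ [g·x, t], is not continuous (C G with the quotient topology), then the diagonal right action map E_n G × G → E_n G, ([g,t], h) ↦ [(i ↦ g i · h), t], is not continuous (E_n G with the quotient topology, the domains with the product topology). -/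
open Set

/-- The Milnor relation on `(Fin (n+1) → G) × Δⁿ`:
`(g,t) ~ (g',t')` iff `t = t'` and `g i = g' i` whenever `t i ≠ 0`. -/
abbrev milnorRel (n : ℕ) (G : Type*) :
    (Fin (n + 1) → G) × stdSimplex ℝ (Fin (n + 1)) →
      (Fin (n + 1) → G) × stdSimplex ℝ (Fin (n + 1)) → Prop := fun p q =>
  p.2 = q.2 ∧ ∀ i, (p.2 : Fin (n + 1) → ℝ) i ≠ 0 → p.1 i = q.1 i

/-- The truncated Milnor space `Eₙ G` with the quotient topology. -/
abbrev MilnorE (n : ℕ) (G : Type*) := Quot (milnorRel n G)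

variable (G : Type*) [Group G] [TopologicalSpace G] [IsTopologicalGroup G] [T2Space G]

/-- The diagonal right action `Eₙ G × G → Eₙ G`,
`([g,t], h) ↦ [(i ↦ g i · h), t]`. -/
def milnorAct (n : ℕ) : MilnorE n G × G → MilnorE n G := fun p =>
  Quot.lift
    (fun x : (Fin (n + 1) → G) × stdSimplex ℝ (Fin (n + 1)) =>
      Quot.mk (milnorRel n G) (fun i => x.1 i * p.2, x.2))
    (fun a b h => Quot.sound ⟨h.1, fun i hi => by simp only at hi ⊢; rw [h.2 i hi]⟩)
    p.1

/-!
The cone embeds into `Eₙ G` along the edge between two distinct vertices `i ≠ j` of `Δⁿ`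
(this is where `n ≥ 1` enters): `[x, t] ↦ [x⁻¹ at i, t eᵢ + (1 - t) eⱼ]`, and reading off the
`i`-th coordinate, `[g, t] ↦ [(g i)⁻¹, t i]`, maps `Eₙ G` back onto the cone. Both maps are
continuous, and they turn the right action of `g⁻¹` on `Eₙ G` into the left action of `g` on the
cone, so the cone action factors continuously through the Milnor action.
-/

section StdSimplexEdge

variable {ι : Type*} [Fintype ι] [DecidableEq ι]

def stdSimplexEdge (i j : ι) (t : Icc (0 : ℝ) 1) : stdSimplex ℝ ι :=
  ⟨(t : ℝ) • Pi.single i 1 + (1 - (t : ℝ)) • Pi.single j 1,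
    convex_stdSimplex ℝ ι (single_mem_stdSimplex ℝ i) (single_mem_stdSimplex ℝ j) t.2.1
      (sub_nonneg.2 t.2.2) (add_sub_cancel _ _)⟩

lemma continuous_stdSimplexEdge (i j : ι) : Continuous (stdSimplexEdge i j) :=
  Continuous.subtype_mk (by fun_prop) _

lemma stdSimplexEdge_apply_left {i j : ι} (hij : i ≠ j) (t : Icc (0 : ℝ) 1) :
    (stdSimplexEdge i j t : ι → ℝ) i = t := by
  change ((t : ℝ) • Pi.single i 1 + (1 - (t : ℝ)) • Pi.single j 1 : ι → ℝ) i = t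
  simp [hij.symm]

end StdSimplexEdge

section ConeMilnorE

variable {G : Type*} [Group G] {n : ℕ} {i j : Fin (n + 1)}

def coneToMilnorE (hij : i ≠ j) : Cone G → MilnorE n G :=
  Quot.lift (fun p => Quot.mk _ (Pi.mulSingle i p.1⁻¹, stdSimplexEdge i j p.2)) <| by
    rintro ⟨x, s⟩ ⟨y, t⟩ (h | ⟨hs, ht⟩)
    · rw [h]
    · have hst : s = t := Subtype.ext (hs.trans ht.symm)
      refine Quot.sound ⟨by rw [hst], fun k hk => ?_⟩
      have hki : k ≠ i := by
        rintro rfl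
        exact hk (by rw [stdSimplexEdge_apply_left hij, hs])
      simp [hki]

def milnorEToCone (i : Fin (n + 1)) : MilnorE n G → Cone G :=
  Quot.lift (fun p => Quot.mk _ ((p.1 i)⁻¹, ⟨p.2 i, mem_Icc_of_mem_stdSimplex p.2.2 i⟩)) <| by
    rintro ⟨g, s⟩ ⟨g', t⟩ ⟨hst, hg⟩
    by_cases hs : (s : Fin (n + 1) → ℝ) i = 0
    · exact Quot.sound (Or.inr ⟨hs, by rw [← hst]; exact hs⟩)
    · obtain rfl : s = t := hst
      rw [hg i hs]

lemma milnorEToCone_milnorAct_coneToMilnorE (hij : i ≠ j) (g : G) (c : Cone G) :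
    milnorEToCone i (milnorAct G n (coneToMilnorE hij c, g⁻¹)) = coneAct G (g, c) := by
  induction c using Quot.ind with
  | mk p =>
    refine congrArg (Quot.mk _) (Prod.ext ?_ (Subtype.ext ?_))
    · simp
    · exact stdSimplexEdge_apply_left hij p.2

variable [TopologicalSpace G] [ContinuousInv G]

lemma continuous_coneToMilnorE (hij : i ≠ j) : Continuous (coneToMilnorE (G := G) hij) :=
  continuous_quot_lift _ <| continuous_quot_mk.comp <|
    ((continuous_mulSingle (A := fun _ => G) i).comp continuous_fst.inv).prodMk
      ((continuous_stdSimplexEdge i j).comp continuous_snd)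

lemma continuous_milnorEToCone (i : Fin (n + 1)) : Continuous (milnorEToCone (G := G) i) :=
  continuous_quot_lift _ <| continuous_quot_mk.comp <|
    ((continuous_apply i).comp continuous_fst).inv.prodMk <| Continuous.subtype_mk
      ((continuous_apply i).comp (continuous_subtype_val.comp continuous_snd)) _

lemma continuous_coneAct_of_continuous_milnorAct (hij : i ≠ j)
    (hm : Continuous (milnorAct G n)) : Continuous (coneAct G) := by
  have hfactor : coneAct G =
      fun q => milnorEToCone i (milnorAct G n (coneToMilnorE hij q.2, q.1⁻¹)) :=
    funext fun q => (milnorEToCone_milnorAct_coneToMilnorE hij q.1 q.2).symm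
  rw [hfactor]
  exact (continuous_milnorEToCone i).comp <| hm.comp <|
    ((continuous_coneToMilnorE hij).comp continuous_snd).prodMk continuous_fst.inv

end ConeMilnorE

/-- If a Hausdorff topological group acts discontinuously on its
quotient-topologized cone, then for every `n ≥ 1` the diagonal right action
on the quotient-topologized truncated Milnor space `Eₙ G` is also
discontinuous. -/
theorem milnorAct_not_continuous_of_coneAct_not_continuous
    (n : ℕ) (hn : 1 ≤ n) (h : ¬ Continuous (coneAct G)) :
    ¬ Continuous (milnorAct G n) := by
  have h0last : (0 : Fin (n + 1)) ≠ Fin.last n := by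
    rw [Ne, Fin.ext_iff]
    simp only [Fin.val_zero, Fin.val_last]
    omega
  exact fun hm => h (continuous_coneAct_of_continuous_milnorAct h0last hm)
end

section
/- Let G be a locally compact Hausdorff topological group and n ∈ ℕ. Then the diagonal right action map E_n G × G → E_n G, ([g,t], h) ↦ [(i ↦ g i · h), t], is continuous, where E_n G carries the quotient topology and E_n G × G the product topology. -/
open Set

variable (G : Type*) [Group G] [TopologicalSpace G] [IsTopologicalGroup G] [T2Space G]
  [LocallyCompactSpace G]

/-- For a locally compact Hausdorff topological group `G`, the diagonal right
action of `G` on the quotient-topologized truncated Milnor space `Eₙ G` is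
continuous. -/
theorem milnorAct_continuous_of_locallyCompact (n : ℕ) :
    Continuous (milnorAct G n) :=
  -- `Quot.mk × id` need not be a quotient map, but it is one because `G` is locally compact.
  isQuotientMap_quot_mk.continuous_lift_prod_left <| continuous_quot_mk.comp <| by fun_prop
end

section
/- Let k be a field of characteristic zero and A a finite-dimensional semisimple k-algebra. Then there exists a separability idempotent e ∈ A ⊗_k A that is invariant under all algebra automorphisms: for every k-algebra automorphism σ : A ≃ₐ[k] A one has (σ ⊗ σ)(e) = e, where σ ⊗ σ denotes the induced map TensorProduct.map on A ⊗_k A. -/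
/-!
The trace form `B x y = tr (z ↦ x * y * z)` of `A` is symmetric, associative
(`B (x * y) z = B x (y * z)`) and invariant under automorphisms. In characteristic zero it is
nondegenerate when `A` is semisimple: its radical is a left ideal, hence generated by an
idempotent `e`, and left multiplication by `e` is an idempotent of trace `B e 1 = 0`, so `e = 0`.

For a nondegenerate form, `Φ : x ⊗ y ↦ (z ↦ B y z • x)` is an isomorphism `A ⊗ A ≃ End A`, and
the Casimir element `∑ bᵢ ⊗ bᵢ^∨` (dual bases) is `Φ⁻¹ 1`. Under `Φ`, left multiplication by
`a ⊗ 1` and (for associative `B`) right multiplication by `1 ⊗ a` both become composition with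
`z ↦ a * z`, and `σ ⊗ σ` becomes conjugation by `σ` when `σ` preserves `B`; so the Casimir element
commutes with `A` and is fixed by such `σ`. Finally `B (mul' t) a = tr (Φ t ∘ (a * ·))`, which for
the Casimir element of the trace form is `B 1 a`, whence `mul' e = 1`.
-/

open LinearMap TensorProduct

namespace LinearMap.BilinForm

variable {k A : Type*} [Field k] [Ring A] [Algebra k A] [FiniteDimensional k A]
  {B : LinearMap.BilinForm k A}

noncomputable def tensorEquivEnd (hB : B.Nondegenerate) : A ⊗[k] A ≃ₗ[k] Module.End k A :=
  TensorProduct.comm k A A ≪≫ₗ TensorProduct.congr (B.toDual hB) (LinearEquiv.refl k A) ≪≫ₗ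
    dualTensorHomEquiv k A A

variable (hB : B.Nondegenerate)

@[simp]
lemma tensorEquivEnd_tmul (x y z : A) : B.tensorEquivEnd hB (x ⊗ₜ y) z = B y z • x := by
  simp [tensorEquivEnd, toDual_def]

lemma tensorEquivEnd_tmul_one_mul (a : A) (t : A ⊗[k] A) :
    B.tensorEquivEnd hB ((a ⊗ₜ 1) * t) = mulLeft k a * B.tensorEquivEnd hB t := by
  induction t using TensorProduct.induction_on with
  | zero => simp
  | tmul x y => ext z; simp
  | add s t hs ht => simp [mul_add, hs, ht]

lemma tensorEquivEnd_mul_one_tmul (hassoc : ∀ x y z, B (x * y) z = B x (y * z)) (a : A)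
    (t : A ⊗[k] A) :
    B.tensorEquivEnd hB (t * (1 ⊗ₜ a)) = B.tensorEquivEnd hB t * mulLeft k a := by
  induction t using TensorProduct.induction_on with
  | zero => simp
  | tmul x y => ext z; simp [hassoc]
  | add s t hs ht => simp [add_mul, hs, ht]

lemma tensorEquivEnd_map_algEquiv (σ : A ≃ₐ[k] A) (hσ : ∀ x y, B (σ x) (σ y) = B x y)
    (t : A ⊗[k] A) :
    B.tensorEquivEnd hB (map σ.toLinearMap σ.toLinearMap t) =
      σ.toLinearEquiv.conj (B.tensorEquivEnd hB t) := by
  induction t using TensorProduct.induction_on with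
  | zero => simp
  | tmul x y =>
    ext z
    simp [LinearEquiv.conj_apply, ← hσ y (σ.symm z)]
  | add s t hs ht => simp [hs, ht]

lemma apply_mul'_eq_trace (hsymm : B.IsSymm) (hassoc : ∀ x y z, B (x * y) z = B x (y * z))
    (t : A ⊗[k] A) (a : A) :
    B (LinearMap.mul' k A t) a = trace k A (B.tensorEquivEnd hB t * mulLeft k a) := by
  induction t using TensorProduct.induction_on with
  | zero => simp
  | tmul x y =>
    have : B.tensorEquivEnd hB (x ⊗ₜ y) * mulLeft k a =
        dualTensorHom k A A ((B y ∘ₗ mulLeft k a) ⊗ₜ x) := by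
      ext z; simp
    rw [this, trace_eq_contract_apply, contractLeft_apply, mul'_apply, hassoc, hsymm.eq,
      hassoc]
    rfl
  | add s t hs ht => simp [hs, ht, add_mul]

/-- In a basis `b` with `B`-dual basis `b^∨`, this is `∑ i, b i ⊗ₜ b^∨ i`. -/
noncomputable def casimir : A ⊗[k] A := (B.tensorEquivEnd hB).symm 1

@[simp]
lemma tensorEquivEnd_casimir : B.tensorEquivEnd hB (B.casimir hB) = 1 :=
  LinearEquiv.apply_symm_apply _ _

lemma tmul_one_mul_casimir (hassoc : ∀ x y z, B (x * y) z = B x (y * z)) (a : A) :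
    (a ⊗ₜ 1) * B.casimir hB = B.casimir hB * (1 ⊗ₜ a) :=
  (B.tensorEquivEnd hB).injective <| by
    rw [tensorEquivEnd_tmul_one_mul, tensorEquivEnd_mul_one_tmul hB hassoc,
      tensorEquivEnd_casimir, mul_one, one_mul]

lemma map_casimir (σ : A ≃ₐ[k] A) (hσ : ∀ x y, B (σ x) (σ y) = B x y) :
    map σ.toLinearMap σ.toLinearMap (B.casimir hB) = B.casimir hB :=
  (B.tensorEquivEnd hB).injective <| by
    rw [tensorEquivEnd_map_algEquiv hB σ hσ, tensorEquivEnd_casimir, Module.End.one_eq_id,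
      LinearEquiv.conj_id]

lemma mul'_casimir (hsymm : B.IsSymm) (hassoc : ∀ x y z, B (x * y) z = B x (y * z))
    (htrace : ∀ a, B 1 a = trace k A (mulLeft k a)) :
    LinearMap.mul' k A (B.casimir hB) = 1 := by
  refine sub_eq_zero.mp (hB.1 _ fun a ↦ ?_)
  rw [map_sub, LinearMap.sub_apply, apply_mul'_eq_trace hB hsymm hassoc, tensorEquivEnd_casimir,
    one_mul, htrace, sub_self]

end LinearMap.BilinForm

namespace Algebra

variable {k A : Type*} [Field k] [Ring A] [Algebra k A]

variable (k A) in
noncomputable def regularTraceForm : LinearMap.BilinForm k A :=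
  (LinearMap.mul k A).compr₂ (LinearMap.trace k A ∘ₗ LinearMap.mul k A)

lemma regularTraceForm_apply (x y : A) :
    regularTraceForm k A x y = LinearMap.trace k A (mulLeft k (x * y)) :=
  rfl

lemma regularTraceForm_mul_assoc (x y z : A) :
    regularTraceForm k A (x * y) z = regularTraceForm k A x (y * z) := by
  rw [regularTraceForm_apply, regularTraceForm_apply, mul_assoc]

lemma regularTraceForm_isSymm : (regularTraceForm k A).IsSymm :=
  ⟨fun x y ↦ by
    rw [regularTraceForm_apply, regularTraceForm_apply, mulLeft_mul, mulLeft_mul,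
      ← Module.End.mul_eq_comp, ← Module.End.mul_eq_comp, LinearMap.trace_mul_comm]⟩

lemma regularTraceForm_one_left (a : A) :
    regularTraceForm k A 1 a = LinearMap.trace k A (mulLeft k a) := by
  rw [regularTraceForm_apply, one_mul]

lemma regularTraceForm_algEquiv (σ : A ≃ₐ[k] A) (x y : A) :
    regularTraceForm k A (σ x) (σ y) = regularTraceForm k A x y := by
  have : mulLeft k (σ (x * y)) = σ.toLinearEquiv.conj (mulLeft k (x * y)) := by
    ext z; simp [LinearEquiv.conj_apply]
  rw [regularTraceForm_apply, regularTraceForm_apply, ← map_mul, this, LinearMap.trace_conj']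

lemma regularTraceForm_nondegenerate [CharZero k] [FiniteDimensional k A] [IsSemisimpleRing A] :
    (regularTraceForm k A).Nondegenerate := by
  let radical : Ideal A :=
    { carrier := {x | ∀ y, regularTraceForm k A x y = 0}
      add_mem' := fun hx hy z ↦ by simp [hx z, hy z]
      zero_mem' := fun z ↦ by simp
      smul_mem' := fun a x hx y ↦ by
        rw [smul_eq_mul, regularTraceForm_mul_assoc, regularTraceForm_isSymm.eq,
          regularTraceForm_mul_assoc]
        exact hx (y * a) }
  obtain ⟨e, he, hspan⟩ := IsSemisimpleRing.ideal_eq_span_idempotent radical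
  have he_mem : e ∈ radical := hspan ▸ Ideal.subset_span rfl
  have he_zero : e = 0 := by
    have h_idem : IsIdempotentElem (mulLeft k e) := by
      rw [IsIdempotentElem, Module.End.mul_eq_comp, ← mulLeft_mul, he.eq]
    have hmul : mulLeft k e = 0 := h_idem.eq_zero_of_trace_eq_zero <| by
      simpa [regularTraceForm_apply] using he_mem 1
    simpa using congr($hmul 1)
  refine (LinearMap.IsRefl.nondegenerate_iff_separatingLeft (B := regularTraceForm k A)
    regularTraceForm_isSymm.isRefl).mpr fun x hx ↦ ?_
  obtain ⟨c, rfl⟩ := Ideal.mem_span_singleton'.mp (hspan ▸ hx : x ∈ Ideal.span {e})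
  rw [he_zero, mul_zero]

end Algebra

/-- A finite-dimensional semisimple algebra over a field of characteristic
zero possesses a separability idempotent invariant under all algebra
automorphisms. -/
theorem exists_automorphism_invariant_separability_idempotent
    (k : Type*) [Field k] [CharZero k]
    (A : Type*) [Ring A] [Algebra k A] [FiniteDimensional k A]
    [IsSemisimpleRing A] :
    ∃ e : A ⊗[k] A,
      LinearMap.mul' k A e = 1 ∧
      (∀ a : A, (a ⊗ₜ[k] (1 : A)) * e = e * ((1 : A) ⊗ₜ[k] a)) ∧
      ∀ σ : A ≃ₐ[k] A,
        TensorProduct.map σ.toLinearMap σ.toLinearMap e = e := by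
  have hB := Algebra.regularTraceForm_nondegenerate (k := k) (A := A)
  have hassoc := Algebra.regularTraceForm_mul_assoc (k := k) (A := A)
  exact ⟨(Algebra.regularTraceForm k A).casimir hB,
    LinearMap.BilinForm.mul'_casimir hB Algebra.regularTraceForm_isSymm hassoc
      Algebra.regularTraceForm_one_left,
    LinearMap.BilinForm.tmul_one_mul_casimir hB hassoc,
    fun σ ↦ LinearMap.BilinForm.map_casimir hB σ (Algebra.regularTraceForm_algEquiv σ)⟩
end

section
/- Let k be a field of characteristic zero and A a finite-dimensional semisimple k-algebra. Then the bilinear trace form B : A × A → k defined by B(a,b) = trace of the k-linear endomorphism x ↦ a·b·x of A (the trace of left multiplication by a·b in the left regular representation) is nondegenerate: if a ∈ A satisfies B(a,b) = 0 for all b ∈ A, then a = 0. -/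
/-!
The radical of the trace form is a left ideal, because `a, b ↦ trace (mulLeft (a * b))` is
symmetric. In a semisimple ring every left ideal is generated by an idempotent `e`. Left
multiplication by `e` is then a projection whose trace vanishes, and in characteristic zero the
trace of a projection is its rank, so `e = 0` and the radical is trivial.
-/

open LinearMap

section TraceForm

variable (k : Type*) {A : Type*} [Field k] [Ring A] [Algebra k A]

theorem LinearMap.isIdempotentElem_mulLeft {e : A} (he : IsIdempotentElem e) :
    IsIdempotentElem (mulLeft k e) :=
  he.map (Algebra.lmul k A)

variable [FiniteDimensional k A]

theorem LinearMap.trace_mulLeft_mul_comm (a b : A) :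
    trace k A (mulLeft k (a * b)) = trace k A (mulLeft k (b * a)) := by
  rw [mulLeft_mul, trace_comp_comm', ← mulLeft_mul]

variable (A) in
def traceFormRadical : Ideal A where
  carrier := {x | ∀ b : A, trace k A (mulLeft k (x * b)) = 0}
  add_mem' {x y} hx hy b := by
    have hadd : mulLeft k ((x + y) * b) = mulLeft k (x * b) + mulLeft k (y * b) :=
      add_mul x y b ▸ (mul k A).map_add _ _
    rw [hadd, map_add, hx b, hy b, add_zero]
  zero_mem' b := by
    rw [zero_mul, mulLeft_zero_eq_zero, map_zero]
  smul_mem' c x hx b := by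
    rw [smul_eq_mul, mul_assoc, trace_mulLeft_mul_comm, mul_assoc]
    exact hx (b * c)

theorem mem_traceFormRadical {x : A} :
    x ∈ traceFormRadical k A ↔ ∀ b : A, trace k A (mulLeft k (x * b)) = 0 :=
  Iff.rfl

theorem IsIdempotentElem.eq_zero_of_trace_mulLeft_eq_zero [CharZero k] {e : A}
    (he : IsIdempotentElem e) (htr : trace k A (mulLeft k e) = 0) : e = 0 := by
  have hzero : mulLeft k e = 0 := (isIdempotentElem_mulLeft k he).eq_zero_of_trace_eq_zero htr
  rwa [mulLeft_eq_zero_iff] at hzero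

theorem traceFormRadical_eq_bot [CharZero k] [IsSemisimpleRing A] :
    traceFormRadical k A = ⊥ := by
  obtain ⟨e, he, hspan⟩ := IsSemisimpleRing.ideal_eq_span_idempotent (traceFormRadical k A)
  have hmem : e ∈ traceFormRadical k A := hspan ▸ Ideal.mem_span_singleton_self e
  have htr : trace k A (mulLeft k e) = 0 := by
    simpa only [mul_one] using (mem_traceFormRadical k).mp hmem 1
  rw [hspan, he.eq_zero_of_trace_mulLeft_eq_zero k htr, Ideal.span_singleton_zero]

end TraceForm

/-- For a finite-dimensional semisimple algebra `A` over a field `k` of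
characteristic zero, the bilinear trace form
`B(a,b) = trace (x ↦ a·b·x)` (trace of left multiplication by `a·b` in the
left regular representation) is nondegenerate. -/
theorem trace_form_nondegenerate
    (k : Type*) [Field k] [CharZero k]
    (A : Type*) [Ring A] [Algebra k A] [FiniteDimensional k A]
    [IsSemisimpleRing A]
    (a : A) (h : ∀ b : A, LinearMap.trace k A (LinearMap.mulLeft k (a * b)) = 0) :
    a = 0 := by
  have ha : a ∈ traceFormRadical k A := (mem_traceFormRadical k).mpr h
  rwa [traceFormRadical_eq_bot, Ideal.mem_bot] at ha
end

section
/- Let G be a nonempty compact Hausdorff topological group, C G its cone with the quotient topology, and t̄ : C G → ℝ the continuous map induced by (g,t) ↦ t. Let E := { c : ℕ → C G | the set {i ∈ ℕ : t̄(c i) ≠ 0} is finite and ∑_i t̄(c i) = 1 }, equipped with the subspace topology inherited from the product topology on ℕ → C G. Then E is not a Baire space (in particular E is not completely metrizable). -/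
/-!
`E` is the countable union of the closed sets `F n` of sequences whose weights vanish from
`n` on. Each `F n` has empty interior in `E`: given `c ∈ E`, a positive weight `t̄ (c j)` and a
coordinate `m ≥ n` where `c` sits at the apex, moving the fraction `s` of the weight at `j` to `m`
is a continuous path in `E` starting at `c` and leaving `F n` for every `s > 0`. A nonempty Baire
space is not a countable union of closed sets with empty interior.
-/

open Set

/-- The continuous coordinate map `t̄ : C X → ℝ`, `[x,t] ↦ t`. -/
def tbar (X : Type*) : Cone X → ℝ :=
  Quot.lift (fun p => (p.2 : ℝ))
    (by
      rintro a b (rfl | ⟨h0a, h0b⟩)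
      · rfl
      · show (a.2 : ℝ) = (b.2 : ℝ)
        rw [h0a, h0b])

variable (G : Type*) [Group G] [TopologicalSpace G] [IsTopologicalGroup G]
  [CompactSpace G] [T2Space G] [Nonempty G]

/-- The Milnor-type total space: sequences in the cone `C G` whose coordinate
`t̄` has finite support and sums to `1`, topologized as a subspace of the
product `ℕ → C G`. -/
def milnorSet : Set (ℕ → Cone G) :=
  {c | {i : ℕ | tbar G (c i) ≠ 0}.Finite ∧ ∑' i : ℕ, tbar G (c i) = 1}

open Function

namespace Cone

variable {X : Type*}

lemma eq_of_tbar_eq_zero {c d : Cone X} (hc : tbar X c = 0) (hd : tbar X d = 0) : c = d := by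
  induction c using Quot.ind with
  | mk p => induction d using Quot.ind with
    | mk q => exact Quot.sound (Or.inr ⟨hc, hd⟩)

/-- Radial scaling `[x, t] ↦ [x, r t]`, with `r t` clamped to `[0, 1]`. -/
noncomputable def scale (r : ℝ) : Cone X → Cone X :=
  Quot.lift (fun p => Quot.mk _ (p.1, projIcc 0 1 zero_le_one (r * p.2)))
    (by
      rintro p q (rfl | ⟨hp, hq⟩)
      · rfl
      · exact Quot.sound (Or.inr ⟨by simp [hp], by simp [hq]⟩))

lemma tbar_scale {r : ℝ} (hr : r ∈ Icc (0 : ℝ) 1) (c : Cone X) :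
    tbar X (scale r c) = r * tbar X c := by
  induction c using Quot.ind with
  | mk p =>
    have hrp : r * p.2 ∈ Icc (0 : ℝ) 1 :=
      ⟨mul_nonneg hr.1 p.2.2.1, mul_le_one₀ hr.2 p.2.2.1 p.2.2.2⟩
    simp [scale, tbar, projIcc_of_mem zero_le_one hrp]

lemma scale_one (c : Cone X) : scale 1 c = c := by
  induction c using Quot.ind with
  | mk p => simp [scale]

variable [TopologicalSpace X]

lemma continuous_tbar : Continuous (tbar X) :=
  continuous_quot_lift _ (continuous_subtype_val.comp continuous_snd)

lemma continuous_scale_left (c : Cone X) : Continuous fun r : ℝ => scale r c := by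
  induction c using Quot.ind with
  | mk p =>
    exact continuous_quot_mk.comp (continuous_const.prodMk
      (continuous_projIcc.comp (continuous_id.mul continuous_const)))

end Cone

lemma support_update_subset_insert {ι M : Type*} [DecidableEq ι] [Zero M] (f : ι → M) (i : ι)
    (y : M) : support (update f i y) ⊆ insert i (support f) := by
  intro k hk
  rcases eq_or_ne k i with rfl | hki
  · exact mem_insert _ _
  · exact mem_insert_of_mem _ (by rwa [mem_support, update_of_ne hki] at hk)

/-- Milnor's infinite join `X * X * ⋯`, i.e. `milnorSet` without the group structure. -/
def infiniteJoin (X : Type*) : Set (ℕ → Cone X) :=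
  {c | {i : ℕ | tbar X (c i) ≠ 0}.Finite ∧ ∑' i : ℕ, tbar X (c i) = 1}

section InfiniteJoin

variable {X : Type*}

def supportedBelow (n : ℕ) : Set (ℕ → Cone X) :=
  {c | ∀ i, n ≤ i → tbar X (c i) = 0}

/-- Move the fraction `s` of the weight of coordinate `j` to coordinate `m`. -/
noncomputable def transferWeight (c : ℕ → Cone X) (j m : ℕ) (s : ℝ) : ℕ → Cone X :=
  update (update c j (Cone.scale (1 - s) (c j))) m (Cone.scale s (c j))

lemma infiniteJoin_nonempty [Nonempty X] : (infiniteJoin X).Nonempty := by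
  obtain ⟨x⟩ := ‹Nonempty X›
  let c : ℕ → Cone X := update (fun _ => Quot.mk _ (x, 0)) 0 (Quot.mk _ (x, 1))
  have hc : tbar X ∘ c = Pi.single 0 1 := by
    ext i
    rcases eq_or_ne i 0 with rfl | hi <;> simp [c, tbar, *]
  refine ⟨c, ?_, ?_⟩
  · change (support (tbar X ∘ c)).Finite
    rw [hc]
    exact (finite_singleton 0).subset Pi.support_single_subset
  · change ∑' i, (tbar X ∘ c) i = 1
    rw [hc, tsum_pi_single]

lemma infiniteJoin_subset_iUnion_supportedBelow :
    infiniteJoin X ⊆ ⋃ n, supportedBelow n := by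
  intro c hc
  obtain ⟨N, hN⟩ := hc.1.bddAbove
  exact mem_iUnion.2 ⟨N + 1, fun i hi => by_contra fun h => absurd (hN h) (by omega)⟩

lemma tbar_comp_transferWeight (c : ℕ → Cone X) {j m : ℕ} {s : ℝ} (hs : s ∈ Icc (0 : ℝ) 1) :
    tbar X ∘ transferWeight c j m s =
      update (update (tbar X ∘ c) j ((1 - s) * tbar X (c j))) m (s * tbar X (c j)) := by
  have hs' : 1 - s ∈ Icc (0 : ℝ) 1 := ⟨by linarith [hs.2], by linarith [hs.1]⟩
  simp only [transferWeight, comp_update, Cone.tbar_scale hs, Cone.tbar_scale hs']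

lemma transferWeight_mem_infiniteJoin {c : ℕ → Cone X} (hc : c ∈ infiniteJoin X) {j m : ℕ}
    (hjm : j ≠ m) (hm : tbar X (c m) = 0) {s : ℝ} (hs : s ∈ Icc (0 : ℝ) 1) :
    transferWeight c j m s ∈ infiniteJoin X := by
  have hw : HasSum (tbar X ∘ c) 1 := (summable_of_hasFiniteSupport hc.1).hasSum_iff.2 hc.2
  change (support (tbar X ∘ transferWeight c j m s)).Finite ∧
    ∑' i, (tbar X ∘ transferWeight c j m s) i = 1
  rw [tbar_comp_transferWeight c hs]
  constructor
  · exact ((hc.1.insert j).insert m).subset <| (support_update_subset_insert _ _ _).trans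
      (insert_subset_insert (support_update_subset_insert _ _ _))
  · refine ((hw.update j _).update m _).tsum_eq.trans ?_
    simp only [update_of_ne hjm.symm, comp_apply, hm]
    ring

variable [TopologicalSpace X]

lemma isClosed_supportedBelow (n : ℕ) : IsClosed (supportedBelow (X := X) n) := by
  simp only [supportedBelow, ofPred_forall]
  exact isClosed_iInter fun i => isClosed_iInter fun _ =>
    isClosed_eq (Cone.continuous_tbar.comp (continuous_apply i)) continuous_const

lemma continuous_transferWeight (c : ℕ → Cone X) (j m : ℕ) :
    Continuous (transferWeight c j m) :=
  (continuous_const.update j ((Cone.continuous_scale_left _).comp (continuous_const.sub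
    continuous_id))).update m (Cone.continuous_scale_left _)

lemma infiniteJoin_subset_closure_diff_supportedBelow (n : ℕ) :
    infiniteJoin X ⊆ closure (infiniteJoin X \ supportedBelow n) := by
  intro c hc
  obtain ⟨j, hj⟩ : ∃ j, tbar X (c j) ≠ 0 := by
    by_contra! h
    simpa [h] using hc.2
  obtain ⟨m, hm, hnm⟩ := hc.1.infinite_compl.exists_gt (n + j)
  have hm0 : tbar X (c m) = 0 := not_not.1 hm
  have hjm : j ≠ m := by omega
  have h0 : transferWeight c j m 0 = c := by
    have : Cone.scale 0 (c j) = c m :=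
      Cone.eq_of_tbar_eq_zero (by simp [Cone.tbar_scale (left_mem_Icc.2 zero_le_one)]) hm0
    simp [transferWeight, Cone.scale_one, this]
  have h0mem : (0 : ℝ) ∈ closure (Ioc 0 1) := by
    rw [closure_Ioc zero_ne_one]
    exact left_mem_Icc.2 zero_le_one
  rw [← h0]
  refine map_mem_closure (continuous_transferWeight c j m) h0mem fun s hs =>
    ⟨transferWeight_mem_infiniteJoin hc hjm hm0 (Ioc_subset_Icc_self hs), fun hsb => ?_⟩
  have hsm := congr_fun (tbar_comp_transferWeight c (j := j) (m := m) (Ioc_subset_Icc_self hs)) m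
  simp only [comp_apply, update_self, hsb m (by omega)] at hsm
  exact mul_ne_zero hs.1.ne' hj hsm.symm

theorem not_baireSpace_infiniteJoin [Nonempty X] : ¬ BaireSpace (infiniteJoin X) := by
  intro _
  have : Nonempty (infiniteJoin X) := infiniteJoin_nonempty.to_subtype
  obtain ⟨n, hn⟩ := nonempty_interior_of_iUnion_of_closed
    (f := fun n => ((↑) : infiniteJoin X → ℕ → Cone X) ⁻¹' supportedBelow n)
    (fun n => (isClosed_supportedBelow n).preimage continuous_subtype_val)
    (eq_univ_of_forall fun c => by simpa using infiniteJoin_subset_iUnion_supportedBelow c.2)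
  refine hn.ne_empty (interior_eq_empty_iff_dense_compl.2 (Subtype.dense_iff.2 ?_))
  rw [← preimage_compl, image_preimage_eq_inter_range, Subtype.range_coe, inter_comm,
    ← sdiff_eq]
  exact infiniteJoin_subset_closure_diff_supportedBelow n

end InfiniteJoin

/-- For a nonempty compact Hausdorff topological group `G`, the Milnor-type
total space `E` (sequences in the cone with finitely supported coordinates
summing to `1`, in the subspace topology from the product `ℕ → C G`) is not
a Baire space; in particular it is not completely metrizable. -/
theorem milnorSet_not_baireSpace : ¬ BaireSpace (milnorSet G) :=
  not_baireSpace_infiniteJoin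
end

section
/- Let Q denote the quotient of ℚ × (ℚ × [0,1]) by the relation identifying (q,(q',0)) with (q,(q'',0)) for all q,q',q'' ∈ ℚ, with the quotient topology (ℚ with its standard topology). Then the map h : Q → Q induced by (q,(q',t)) ↦ (q,(q'−q,t)) is a well-defined homeomorphism, and it intertwines the diagonal translation with translation in the first factor: for all r,q,q' ∈ ℚ and t ∈ [0,1], h(q+r, [q'+r, t]) equals the image of h(q, [q', t]) under translating the first coordinate by r. -/
open Set

/-- Relation on `ℚ × (ℚ × [0,1])` identifying `(q,(q',0)) ~ (q,(q'',0))`. -/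
abbrev qRel : ℚ × (ℚ × Icc (0 : ℝ) 1) → ℚ × (ℚ × Icc (0 : ℝ) 1) → Prop :=
  fun p q => p = q ∨ (p.1 = q.1 ∧ (p.2.2 : ℝ) = 0 ∧ (q.2.2 : ℝ) = 0)

/-- The quotient `Q` of `ℚ × (ℚ × [0,1])` by `(q,(q',0)) ~ (q,(q'',0))`,
with the quotient topology. -/
abbrev QSpace := Quot qRel

/-- The map `(q,(q',t)) ↦ (q,(q'−q,t))` on representatives. -/
def shearPre : ℚ × (ℚ × Icc (0 : ℝ) 1) → ℚ × (ℚ × Icc (0 : ℝ) 1) := fun p =>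
  (p.1, (p.2.1 - p.1, p.2.2))

/-- The (well-defined) induced map `h : Q → Q`, `(q,[q',t]) ↦ (q,[q'−q,t])`. -/
def shear : QSpace → QSpace :=
  Quot.map shearPre
    (by
      rintro a b (rfl | ⟨h1, h2, h3⟩)
      · exact Or.inl rfl
      · exact Or.inr ⟨by simp only [shearPre]; rw [h1], h2, h3⟩)

/-- Translation of the first coordinate by `r`, induced on `Q`. -/
def translateFst (r : ℚ) : QSpace → QSpace :=
  Quot.map (fun p => (p.1 + r, p.2))
    (by
      rintro a b (rfl | ⟨h1, h2, h3⟩)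
      · exact Or.inl rfl
      · exact Or.inr ⟨by simp only []; rw [h1], h2, h3⟩)

/-! The shear is a homeomorphism of `ℚ × (ℚ × [0,1])` fixing the first coordinate and `t`, so
it maps each collapsed fibre `{q} × ℚ × {0}` onto itself and descends to a homeomorphism of the
quotient; the intertwining identity holds already upstairs, since `(q' + r) - (q + r) = q' - q`. -/

def shearHomeomorph (G X : Type*) [AddGroup G] [TopologicalSpace G] [IsTopologicalAddGroup G]
    [TopologicalSpace X] : G × (G × X) ≃ₜ G × (G × X) where
  toFun p := (p.1, (p.2.1 - p.1, p.2.2))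
  invFun p := (p.1, (p.2.1 + p.1, p.2.2))
  left_inv p := by simp
  right_inv p := by simp
  continuous_toFun := by fun_prop
  continuous_invFun := by fun_prop

theorem shearPre_injective : Function.Injective shearPre :=
  (shearHomeomorph ℚ (Icc (0 : ℝ) 1)).injective

theorem qRel_iff_qRel_shearPre (a b : ℚ × (ℚ × Icc (0 : ℝ) 1)) :
    qRel a b ↔ qRel (shearPre a) (shearPre b) :=
  or_congr shearPre_injective.eq_iff.symm Iff.rfl

theorem shearPre_add_diag (r q q' : ℚ) (t : Icc (0 : ℝ) 1) :
    shearPre (q + r, (q' + r, t)) = ((shearPre (q, (q', t))).1 + r, (shearPre (q, (q', t))).2) := by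
  simp only [shearPre, add_sub_add_right_eq_sub]

/-- The map `h : Q → Q` induced by `(q,(q',t)) ↦ (q,(q'−q,t))` is a
well-defined homeomorphism of the quotient-topologized `Q`, and it
intertwines the diagonal translation with translation in the first factor:
`h(q+r, [q'+r, t])` is the image of `h(q, [q', t])` under translation of the
first coordinate by `r`. -/
theorem shear_homeomorph_and_intertwines :
    ∃ H : QSpace ≃ₜ QSpace,
      (∀ p : ℚ × (ℚ × Icc (0 : ℝ) 1),
        H (Quot.mk qRel p) = Quot.mk qRel (shearPre p)) ∧
      ∀ (r q q' : ℚ) (t : Icc (0 : ℝ) 1),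
        H (Quot.mk qRel (q + r, (q' + r, t))) =
          translateFst r (H (Quot.mk qRel (q, (q', t)))) := by
  refine ⟨Homeomorph.Quot.congr (shearHomeomorph ℚ (Icc (0 : ℝ) 1)) qRel_iff_qRel_shearPre,
    fun p => rfl, fun r q q' t => ?_⟩
  exact congrArg (Quot.mk qRel) (shearPre_add_diag r q q' t)
end
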